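/- With B = Jᵀ H⁻¹ Z and F = Jᵀ H⁻¹ J − B G⁻¹ (Zᵀ H⁻¹ J) assumed invertible, the following identity holds: F⁻¹ Jᵀ H⁻¹ − F⁻¹ B G⁻¹ Zᵀ H⁻¹ = (Jᵀ Ω⁻¹ J)⁻¹ Jᵀ Ω⁻¹ (appendix claim 1 in the proof of Proposition 2). -/

import Mathlib

open Matrix

/-! The Woodbury identity gives `Ω⁻¹ = H⁻¹ - H⁻¹ Z G⁻¹ Zᵀ H⁻¹`, since `G` is exactly the capacitance
matrix `(C Q Cᵀ)⁻¹ + Zᵀ H⁻¹ Z` of `Ω = H + Z (C Q Cᵀ) Zᵀ`, invertible because positive definite. Hence `F = Jᵀ Ω⁻¹ J`, and the left-hand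
side is `F⁻¹ Jᵀ Ω⁻¹`. -/

namespace Matrix

variable {n m : Type*} [Fintype n] [Fintype m] [DecidableEq n] [DecidableEq m]

lemma PosDef.mul_mul_transpose_of_isUnit {Q C : Matrix m m ℝ} (hQ : Q.PosDef) (hC : IsUnit C) :
    (C * Q * Cᵀ).PosDef := by
  simpa [star_eq_conjTranspose] using (IsUnit.posDef_star_right_conjugate_iff hC).2 hQ

lemma inv_add_mul_mul_transpose {H : Matrix n n ℝ} {M : Matrix m m ℝ} (hH : H.PosDef)
    (hM : M.PosDef) (Z : Matrix n m ℝ) :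
    (H + Z * M * Zᵀ)⁻¹ = H⁻¹ - H⁻¹ * Z * (M⁻¹ + Zᵀ * H⁻¹ * Z)⁻¹ * Zᵀ * H⁻¹ := by
  have hZHZ : (Zᵀ * H⁻¹ * Z).PosSemidef := by
    simpa using hH.inv.posSemidef.conjTranspose_mul_mul_same Z
  exact add_mul_mul_inv_eq_sub H Z M Zᵀ hH.isUnit hM.isUnit (hM.inv.add_posSemidef hZHZ).isUnit

end Matrix

theorem appendix_claim_1_general
    (n m k : ℕ)
    (H : Matrix (Fin n) (Fin n) ℝ) (Q : Matrix (Fin m) (Fin m) ℝ)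
    (C : Matrix (Fin m) (Fin m) ℝ) (Z : Matrix (Fin n) (Fin m) ℝ)
    (J : Matrix (Fin n) (Fin k) ℝ)
    (hH : H.PosDef) (hQ : Q.PosDef) (hC : IsUnit C)
    (Ω : Matrix (Fin n) (Fin n) ℝ) (hΩ : Ω = H + Z * C * Q * Cᵀ * Zᵀ)
    (G : Matrix (Fin m) (Fin m) ℝ) (hG : G = Zᵀ * H⁻¹ * Z + C⁻¹ᵀ * Q⁻¹ * C⁻¹)
    (B : Matrix (Fin k) (Fin m) ℝ) (hB : B = Jᵀ * H⁻¹ * Z)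
    (F : Matrix (Fin k) (Fin k) ℝ)
    (hF : F = Jᵀ * H⁻¹ * J - B * G⁻¹ * (Zᵀ * H⁻¹ * J)) :
    F⁻¹ * Jᵀ * H⁻¹ - F⁻¹ * B * G⁻¹ * Zᵀ * H⁻¹ = (Jᵀ * Ω⁻¹ * J)⁻¹ * Jᵀ * Ω⁻¹ := by
  have hCQC : C⁻¹ᵀ * Q⁻¹ * C⁻¹ = (C * Q * Cᵀ)⁻¹ := by
    rw [Matrix.mul_inv_rev, Matrix.mul_inv_rev, transpose_nonsing_inv, Matrix.mul_assoc]
  have hΩinv : Ω⁻¹ = H⁻¹ - H⁻¹ * Z * G⁻¹ * Zᵀ * H⁻¹ := by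
    rw [hΩ, hG, hCQC, add_comm (Zᵀ * H⁻¹ * Z),
      ← inv_add_mul_mul_transpose hH (hQ.mul_mul_transpose_of_isUnit hC)]
    simp only [Matrix.mul_assoc]
  have hFΩ : F = Jᵀ * Ω⁻¹ * J := by
    rw [hF, hB, hΩinv]
    simp only [Matrix.mul_sub, Matrix.sub_mul, Matrix.mul_assoc]
  rw [← hFΩ, hΩinv, hB]
  simp only [Matrix.mul_sub, Matrix.mul_assoc]

/-- Appendix claim 1 in the proof of Proposition 2:
F⁻¹ Jᵀ H⁻¹ − F⁻¹ B G⁻¹ Zᵀ H⁻¹ = (Jᵀ Ω⁻¹ J)⁻¹ Jᵀ Ω⁻¹. -/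
theorem appendix_claim_1
    (n m k : ℕ)
    (H : Matrix (Fin n) (Fin n) ℝ) (Q : Matrix (Fin m) (Fin m) ℝ)
    (C : Matrix (Fin m) (Fin m) ℝ) (Z : Matrix (Fin n) (Fin m) ℝ)
    (J : Matrix (Fin n) (Fin k) ℝ)
    (hH : H.PosDef) (hQ : Q.PosDef) (hC : IsUnit C)
    (Ω : Matrix (Fin n) (Fin n) ℝ) (hΩ : Ω = H + Z * C * Q * Cᵀ * Zᵀ)
    (G : Matrix (Fin m) (Fin m) ℝ) (hG : G = Zᵀ * H⁻¹ * Z + C⁻¹ᵀ * Q⁻¹ * C⁻¹)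
    (hJ : IsUnit (Jᵀ * Ω⁻¹ * J))
    (B : Matrix (Fin k) (Fin m) ℝ) (hB : B = Jᵀ * H⁻¹ * Z)
    (F : Matrix (Fin k) (Fin k) ℝ)
    (hF : F = Jᵀ * H⁻¹ * J - B * G⁻¹ * (Zᵀ * H⁻¹ * J))
    (hFu : IsUnit F) :
    F⁻¹ * Jᵀ * H⁻¹ - F⁻¹ * B * G⁻¹ * Zᵀ * H⁻¹ = (Jᵀ * Ω⁻¹ * J)⁻¹ * Jᵀ * Ω⁻¹ :=
  appendix_claim_1_general n m k H Q C Z J hH hQ hC Ω hΩ G hG B hB F hF
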